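/- There is no preorder ≽ on Δ that simultaneously satisfies Pareto, Converse Pareto, Unidimensional Continuity, Unidimensional Certainty Equivalents, Independence, and Negative Dominance. -/

import Mathlib

open scoped BigOperators

noncomputable section

/-- A finite-support lottery on `X`. -/
structure Lottery (X : Type*) where
  val : X →₀ ℝ
  nonneg : ∀ x, 0 ≤ val x
  total : val.sum (fun _ p => p) = 1

namespace Lottery

variable {X : Type*}

/-- The point-mass lottery at `x`. -/
def delta (x : X) : Lottery X where
  val := Finsupp.single x 1
  nonneg := fun y => by
    classical
    rw [Finsupp.single_apply]
    split <;> norm_num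
  total := by
    rw [Finsupp.sum_single_index rfl]

/-- The mixture `α • f + (1 - α) • g`. -/
def mix (α : ℝ) (h1 : 0 ≤ α) (h2 : α ≤ 1) (f g : Lottery X) : Lottery X where
  val := α • f.val + (1 - α) • g.val
  nonneg := fun x => by
    have hf := f.nonneg x
    have hg := g.nonneg x
    simp only [Finsupp.coe_add, Finsupp.coe_smul, Pi.add_apply, Pi.smul_apply, smul_eq_mul]
    nlinarith
  total := by
    rw [Finsupp.sum_add_index' (fun _ => rfl) (fun _ _ _ => rfl)]
    rw [Finsupp.sum_smul_index (fun _ => rfl), Finsupp.sum_smul_index (fun _ => rfl)]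
    rw [← Finsupp.mul_sum, ← Finsupp.mul_sum, f.total, g.total]
    ring

/-- The uniform lottery on `a` and `b`, written `a/b` in the paper. -/
def unif (a b : X) : Lottery X := mix (1/2) (by norm_num) (by norm_num) (delta a) (delta b)

/-- Strict preference. -/
def SPref (R : Lottery X → Lottery X → Prop) (f g : Lottery X) : Prop := R f g ∧ ¬ R g f

/-- Indifference. -/
def Indiff (R : Lottery X → Lottery X → Prop) (f g : Lottery X) : Prop := R f g ∧ R g f

/-- Incomparability. -/
def Incomp (R : Lottery X → Lottery X → Prop) (f g : Lottery X) : Prop := ¬ R f g ∧ ¬ R g f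

/-- Negative Dominance. -/
def NegDominance (R : Lottery X → Lottery X → Prop) : Prop :=
  ∀ f g : Lottery X, SPref R f g →
    ∃ o ∈ f.val.support, ∃ o' ∈ g.val.support, SPref R (delta o) (delta o')

/-- Independence. -/
def Independence (R : Lottery X → Lottery X → Prop) : Prop :=
  ∀ f g h : Lottery X, ∀ α : ℝ, ∀ (h1 : 0 < α) (h2 : α < 1),
    (R f g ↔ R (mix α h1.le h2.le f h) (mix α h1.le h2.le g h))

/-- The coordinatewise expectation of a lottery on `ℝ²`. -/
def expLot (f : Lottery (ℝ × ℝ)) : ℝ × ℝ :=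
  (f.val.sum fun o p => p * o.1, f.val.sum fun o p => p * o.2)

/-- Pareto. -/
def Pareto (R : Lottery (ℝ × ℝ) → Lottery (ℝ × ℝ) → Prop) : Prop :=
  ∀ x y x' y' : ℝ, x' ≤ x → y' ≤ y → R (delta (x, y)) (delta (x', y'))

/-- Converse Pareto. -/
def ConvPareto (R : Lottery (ℝ × ℝ) → Lottery (ℝ × ℝ) → Prop) : Prop :=
  ∀ x y x' y' : ℝ, R (delta (x, y)) (delta (x', y')) → x' ≤ x ∧ y' ≤ y

/-- Two outcomes are unidimensional with each other if they differ in at most one coordinate. -/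
def UniWith {A B : Type*} (o o' : A × B) : Prop := o.1 = o'.1 ∨ o.2 = o'.2

/-- A lottery is unidimensional if any two outcomes in its support are unidimensional
with each other. -/
def Unidim {A B : Type*} (f : Lottery (A × B)) : Prop :=
  ∀ o ∈ f.val.support, ∀ o' ∈ f.val.support, UniWith o o'

/-- Expectationalism. -/
def Expectationalism (R : Lottery (ℝ × ℝ) → Lottery (ℝ × ℝ) → Prop) : Prop :=
  ∀ f, Indiff R f (delta (expLot f))

/-- Unidimensional Expectations. -/
def UnidimExp (R : Lottery (ℝ × ℝ) → Lottery (ℝ × ℝ) → Prop) : Prop :=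
  ∀ f, Unidim f → Indiff R f (delta (expLot f))

end Lottery

open Lottery

/-- Unidimensional Continuity. -/
def UnidimCont (R : Lottery (ℝ × ℝ) → Lottery (ℝ × ℝ) → Prop) : Prop :=
  ∀ a b c : ℝ × ℝ,
    SPref R (delta a) (delta b) → SPref R (delta b) (delta c) →
    UniWith a b → UniWith a c → UniWith b c →
    ∃ f : Lottery (ℝ × ℝ), (f.val.support : Set (ℝ × ℝ)) ⊆ {a, c} ∧ Indiff R f (delta b)

/-- Unidimensional Certainty Equivalents. -/
def UnidimCE (R : Lottery (ℝ × ℝ) → Lottery (ℝ × ℝ) → Prop) : Prop :=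
  ∀ f : Lottery (ℝ × ℝ), Unidim f →
    ∃ ostar : ℝ × ℝ, (∀ o ∈ f.val.support, UniWith ostar o) ∧ Indiff R f (delta ostar) ∧
      ((∃ o ∈ f.val.support, ∃ o' ∈ f.val.support, SPref R (delta o) (delta o')) →
        ∃ o'' ∈ f.val.support, ∃ o''' ∈ f.val.support,
          SPref R (delta o'') (delta ostar) ∧ SPref R (delta ostar) (delta o'''))

/-!
Let `(c, 0)` be the certainty equivalent of the even gamble between `(1, 0)` and `(0, 0)`; by
continuity, `B = κ (1,1) + (1-κ) (0,1) ∼ (c/2, 1)` for some `κ ∈ (0,1)`, and let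
`A = (1-κ) (1,0) + κ (0,0) ∼ (a, 0)`. The even mixture of `A` and `B` is also the even mixture of
the vertical gambles `κ (1,1) + (1-κ) (1,0) ∼ (1, γ₁)` and `(1-κ) (0,1) + κ (0,0) ∼ (0, γ₀)`, whose
certainty equivalents lie strictly above the bottom row. By Independence and Pareto, the even gamble
`Q` between `(a, 0)` and `(c/2, 1)` is at least as good as the even gamble between `(1, γ)` and
`(0, γ)`, `γ = min γ₀ γ₁ > 0`, whose certainty equivalent `(c', γ)` has `c' ≥ c > c/2`. Negative
Dominance then forces `(a, 0)` or `(c/2, 1)` to Pareto-dominate `(c', γ)`, which neither does.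
-/

namespace Lottery

variable {X : Type*}

@[ext]
theorem ext {f g : Lottery X} (h : f.val = g.val) : f = g := by
  cases f; cases g; simpa using h

theorem mix_val_apply {α : ℝ} {h₀ : 0 ≤ α} {h₁ : α ≤ 1} (f g : Lottery X) (x : X) :
    (mix α h₀ h₁ f g).val x = α * f.val x + (1 - α) * g.val x := rfl

theorem mix_comm {α : ℝ} {h₀ : 0 ≤ α} {h₁ : α ≤ 1} {h₀' : 0 ≤ 1 - α} {h₁' : 1 - α ≤ 1}
    (f g : Lottery X) : mix (1 - α) h₀' h₁' f g = mix α h₀ h₁ g f := by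
  ext x; simp only [mix_val_apply]; ring

theorem mix_zero {h₀ : (0 : ℝ) ≤ 0} {h₁ : (0 : ℝ) ≤ 1} (f g : Lottery X) : mix 0 h₀ h₁ f g = g := by
  ext x; simp only [mix_val_apply]; ring

theorem mix_one {h₀ : (0 : ℝ) ≤ 1} {h₁ : (1 : ℝ) ≤ 1} (f g : Lottery X) : mix 1 h₀ h₁ f g = f := by
  ext x; simp only [mix_val_apply]; ring

theorem mix_half_mix_mix_comm {β β' : ℝ} (hβ : β + β' = 1) {h₀ : 0 ≤ β} {h₁ : β ≤ 1}
    {h₀' : 0 ≤ β'} {h₁' : β' ≤ 1} (f g h k : Lottery X) :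
    mix (1 / 2) one_half_pos.le one_half_lt_one.le (mix β h₀ h₁ f g) (mix β' h₀' h₁' h k) =
      mix (1 / 2) one_half_pos.le one_half_lt_one.le (mix β' h₀' h₁' h f) (mix β h₀ h₁ k g) := by
  obtain rfl : β' = 1 - β := by linarith
  ext x; simp only [mix_val_apply]; ring

section TwoPoints

variable {α : ℝ} {h₀ : 0 ≤ α} {h₁ : α ≤ 1} {p q : X}

theorem eq_or_eq_of_mem_support_mix_delta {x : X}
    (hx : x ∈ (mix α h₀ h₁ (delta p) (delta q)).val.support) : x = p ∨ x = q := by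
  by_contra! hne
  simp [Finsupp.mem_support_iff, mix_val_apply, delta, hne.1.symm, hne.2.symm] at hx

theorem left_mem_support_mix_delta (hα : 0 < α) (hpq : p ≠ q) :
    p ∈ (mix α h₀ h₁ (delta p) (delta q)).val.support := by
  simp [Finsupp.mem_support_iff, mix_val_apply, delta, hpq.symm, hα.ne']

theorem right_mem_support_mix_delta (hα : α < 1) (hpq : p ≠ q) :
    q ∈ (mix α h₀ h₁ (delta p) (delta q)).val.support := by
  simp [Finsupp.mem_support_iff, mix_val_apply, delta, hpq, sub_ne_zero, hα.ne']

theorem exists_eq_mix_delta_of_support_subset {f : Lottery X} (hpq : p ≠ q)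
    (hf : (f.val.support : Set X) ⊆ {p, q}) :
    ∃ w, ∃ (hw₀ : 0 ≤ w) (hw₁ : w ≤ 1), f = mix w hw₀ hw₁ (delta p) (delta q) := by
  classical
  have hsub : f.val.support ⊆ {p, q} := by simpa [← Finset.coe_subset] using hf
  have hsum : f.val p + f.val q = 1 := by
    rw [← Finset.sum_pair hpq, ← f.total, Finsupp.sum_of_support_subset f.val hsub _ fun _ _ => rfl]
  refine ⟨f.val p, f.nonneg p, by linarith [f.nonneg q], ?_⟩
  ext x
  rw [mix_val_apply]
  by_cases hxp : x = p
  · subst hxp; simp [delta, hpq.symm]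
  by_cases hxq : x = q
  · subst hxq; simp only [delta, Finsupp.single_eq_same, Finsupp.single_eq_of_ne' hpq]; linarith
  have hx : f.val x = 0 := Finsupp.notMem_support_iff.1 fun hx => by
    simpa [hxp, hxq] using hsub hx
  simp [delta, Ne.symm hxp, Ne.symm hxq, hx]

theorem unidim_mix_delta {A B : Type*} {p q : A × B} (hpq : UniWith p q) :
    Unidim (mix α h₀ h₁ (delta p) (delta q)) := by
  intro o ho o' ho'
  rcases eq_or_eq_of_mem_support_mix_delta ho with rfl | rfl <;>
    rcases eq_or_eq_of_mem_support_mix_delta ho' with rfl | rfl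
  exacts [Or.inl rfl, hpq, hpq.imp Eq.symm Eq.symm, Or.inl rfl]

end TwoPoints

section Preference

variable {R : Lottery X → Lottery X → Prop}

theorem Independence.mix_le_mix (hI : Independence R) (hT : Transitive R) {α : ℝ} (h₀ : 0 < α)
    (h₁ : α < 1) {f₁ f₂ g₁ g₂ : Lottery X} (hf : R f₁ g₁) (hg : R f₂ g₂) :
    R (mix α h₀.le h₁.le f₁ f₂) (mix α h₀.le h₁.le g₁ g₂) := by
  have hright : R (mix α h₀.le h₁.le g₁ f₂) (mix α h₀.le h₁.le g₁ g₂) := by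
    have h := (hI f₂ g₂ g₁ (1 - α) (sub_pos.2 h₁) (sub_lt_self 1 h₀)).1 hg
    rwa [mix_comm (h₀ := h₀.le) (h₁ := h₁.le), mix_comm (h₀ := h₀.le) (h₁ := h₁.le)] at h
  exact hT ((hI f₁ g₁ f₂ α h₀ h₁).1 hf) hright

theorem Independence.mix_indiff_mix (hI : Independence R) (hT : Transitive R) {α : ℝ}
    (h₀ : 0 < α) (h₁ : α < 1) {f₁ f₂ g₁ g₂ : Lottery X} (hf : Indiff R f₁ g₁)
    (hg : Indiff R f₂ g₂) : Indiff R (mix α h₀.le h₁.le f₁ f₂) (mix α h₀.le h₁.le g₁ g₂) :=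
  ⟨hI.mix_le_mix hT h₀ h₁ hf.1 hg.1, hI.mix_le_mix hT h₀ h₁ hf.2 hg.2⟩

end Preference

section Pareto

variable {R : Lottery (ℝ × ℝ) → Lottery (ℝ × ℝ) → Prop}

theorem delta_le_delta_iff (hP : Pareto R) (hCP : ConvPareto R) {p q : ℝ × ℝ} :
    R (delta p) (delta q) ↔ q ≤ p :=
  ⟨hCP p.1 p.2 q.1 q.2, fun h => hP p.1 p.2 q.1 q.2 h.1 h.2⟩

theorem sPref_delta_iff (hP : Pareto R) (hCP : ConvPareto R) {p q : ℝ × ℝ} :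
    SPref R (delta p) (delta q) ↔ q < p := by
  rw [SPref, delta_le_delta_iff hP hCP, delta_le_delta_iff hP hCP, lt_iff_le_not_ge]

theorem NegDominance.exists_mem_support_gt (hND : NegDominance R) (hT : Transitive R)
    (hP : Pareto R) (hCP : ConvPareto R) {f : Lottery (ℝ × ℝ)} {o o' : ℝ × ℝ}
    (hf : R f (delta o)) (ho : o' < o) : ∃ x ∈ f.val.support, o' < x := by
  have hoo' := (sPref_delta_iff hP hCP).2 ho
  obtain ⟨x, hx, y, hy, hxy⟩ := hND f (delta o') ⟨hT hf hoo'.1, fun h => hoo'.2 (hT h hf)⟩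
  obtain rfl : y = o' := Finset.mem_singleton.1 (Finsupp.support_single_subset hy)
  exact ⟨x, hx, (sPref_delta_iff hP hCP).1 hxy⟩

theorem NegDominance.le_or_le_of_mix_le_delta (hND : NegDominance R) (hT : Transitive R)
    (hP : Pareto R) (hCP : ConvPareto R) {α : ℝ} {h₀ : 0 ≤ α} {h₁ : α ≤ 1} {p q o : ℝ × ℝ}
    (hf : R (mix α h₀ h₁ (delta p) (delta q)) (delta o)) : o ≤ p ∨ o ≤ q := by
  by_contra! hgap
  have hgap_pos : ∀ x : ℝ × ℝ, ¬o ≤ x → 0 < max (o.1 - x.1) (o.2 - x.2) := fun x hx => by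
    rw [Prod.le_def, not_and_or, not_le, not_le] at hx
    rw [lt_max_iff, sub_pos, sub_pos]
    exact hx
  obtain ⟨ε, hε, hεgap⟩ := exists_between (lt_min (hgap_pos p hgap.1) (hgap_pos q hgap.2))
  obtain ⟨x, hx, hlt⟩ := hND.exists_mem_support_gt hT hP hCP hf (o' := (o.1 - ε, o.2 - ε))
    (Prod.mk_lt_mk.2 (Or.inl ⟨by linarith, by linarith⟩))
  obtain ⟨hx₁, hx₂⟩ := Prod.mk_le_mk.1 hlt.le
  have hxgap : ε < max (o.1 - x.1) (o.2 - x.2) := by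
    rcases eq_or_eq_of_mem_support_mix_delta hx with rfl | rfl
    exacts [hεgap.trans_le (min_le_left _ _), hεgap.trans_le (min_le_right _ _)]
  exact (max_le (by linarith) (by linarith)).not_gt hxgap

theorem Independence.le_of_indiff_mix_row (hI : Independence R) (hT : Transitive R)
    (hP : Pareto R) (hCP : ConvPareto R) {x₁ x₂ y y' t t' w : ℝ} (hw₀ : 0 < w) (hw₁ : w < 1)
    (hy : y' ≤ y)
    (ht : Indiff R (mix w hw₀.le hw₁.le (delta (x₁, y)) (delta (x₂, y))) (delta (t, y)))
    (ht' : Indiff R (mix w hw₀.le hw₁.le (delta (x₁, y')) (delta (x₂, y'))) (delta (t', y'))) :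
    t' ≤ t := by
  have hup := hI.mix_le_mix hT hw₀ hw₁ (hP x₁ y x₁ y' le_rfl hy) (hP x₂ y x₂ y' le_rfl hy)
  exact ((delta_le_delta_iff hP hCP).1 (hT (hT ht.2 hup) ht'.1)).1

end Pareto

end Lottery

section Unidimensional

variable {R : Lottery (ℝ × ℝ) → Lottery (ℝ × ℝ) → Prop}

theorem UnidimCE.exists_between_indiff_mix (hCE : UnidimCE R) (hP : Pareto R)
    (hCP : ConvPareto R) {p q : ℝ × ℝ} (hqp : q < p) (hpq : UniWith p q) {w : ℝ} (hw₀ : 0 < w)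
    (hw₁ : w < 1) :
    ∃ o, q < o ∧ o < p ∧ Indiff R (mix w hw₀.le hw₁.le (delta p) (delta q)) (delta o) := by
  have hp := left_mem_support_mix_delta (h₀ := hw₀.le) (h₁ := hw₁.le) hw₀ hqp.ne'
  have hq := right_mem_support_mix_delta (h₀ := hw₀.le) (h₁ := hw₁.le) hw₁ hqp.ne'
  obtain ⟨o, -, hind, hbetween⟩ := hCE _ (unidim_mix_delta hpq)
  obtain ⟨x, hx, y, hy, hxo, hoy⟩ := hbetween ⟨p, hp, q, hq, (sPref_delta_iff hP hCP).2 hqp⟩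
  rw [sPref_delta_iff hP hCP] at hxo hoy
  refine ⟨o, ?_, ?_, hind⟩
  · rcases eq_or_eq_of_mem_support_mix_delta hy with rfl | rfl
    exacts [hqp.trans hoy, hoy]
  · rcases eq_or_eq_of_mem_support_mix_delta hx with rfl | rfl
    exacts [hxo, hxo.trans hqp]

theorem UnidimCE.exists_row_indiff_mix (hCE : UnidimCE R) (hP : Pareto R) (hCP : ConvPareto R)
    {x₁ x₂ y w : ℝ} (hx : x₂ < x₁) (hw₀ : 0 < w) (hw₁ : w < 1) :
    ∃ t, x₂ < t ∧ t < x₁ ∧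
      Indiff R (mix w hw₀.le hw₁.le (delta (x₁, y)) (delta (x₂, y))) (delta (t, y)) := by
  obtain ⟨⟨t, s⟩, hq, hp, hind⟩ :=
    hCE.exists_between_indiff_mix hP hCP (Prod.mk_lt_mk_iff_left.2 hx) (Or.inr rfl) hw₀ hw₁
  obtain rfl : s = y := le_antisymm hp.le.2 hq.le.2
  exact ⟨t, Prod.mk_lt_mk_iff_left.1 hq, Prod.mk_lt_mk_iff_left.1 hp, hind⟩

theorem UnidimCE.exists_col_indiff_mix (hCE : UnidimCE R) (hP : Pareto R) (hCP : ConvPareto R)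
    {x y₁ y₂ w : ℝ} (hy : y₂ < y₁) (hw₀ : 0 < w) (hw₁ : w < 1) :
    ∃ s, y₂ < s ∧ s < y₁ ∧
      Indiff R (mix w hw₀.le hw₁.le (delta (x, y₁)) (delta (x, y₂))) (delta (x, s)) := by
  obtain ⟨⟨t, s⟩, hq, hp, hind⟩ :=
    hCE.exists_between_indiff_mix hP hCP (Prod.mk_lt_mk_iff_right.2 hy) (Or.inl rfl) hw₀ hw₁
  obtain rfl : t = x := le_antisymm hp.le.1 hq.le.1
  exact ⟨s, Prod.mk_lt_mk_iff_right.1 hq, Prod.mk_lt_mk_iff_right.1 hp, hind⟩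

theorem UnidimCont.exists_mix_indiff (hUC : UnidimCont R) (hP : Pareto R) (hCP : ConvPareto R)
    {p o q : ℝ × ℝ} (hqo : q < o) (hop : o < p) (hpo : UniWith p o) (hpq : UniWith p q)
    (hoq : UniWith o q) :
    ∃ w, ∃ (hw₀ : 0 < w) (hw₁ : w < 1),
      Indiff R (mix w hw₀.le hw₁.le (delta p) (delta q)) (delta o) := by
  have hpo' := (sPref_delta_iff hP hCP).2 hop
  have hoq' := (sPref_delta_iff hP hCP).2 hqo
  obtain ⟨f, hsupp, hf⟩ := hUC p o q hpo' hoq' hpo hpq hoq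
  obtain ⟨w, hw₀, hw₁, rfl⟩ := exists_eq_mix_delta_of_support_subset (hqo.trans hop).ne' hsupp
  obtain rfl | hw₀ := hw₀.eq_or_lt
  · rw [mix_zero] at hf
    exact absurd hf.1 hoq'.2
  obtain rfl | hw₁ := hw₁.eq_or_lt
  · rw [mix_one] at hf
    exact absurd hf.2 hpo'.2
  exact ⟨w, hw₀, hw₁, hf⟩

end Unidimensional

/-- There is no preorder on Δ satisfying Pareto, Converse Pareto,
Unidimensional Continuity, Unidimensional Certainty Equivalents, Independence, and
Negative Dominance. -/
theorem statement6 :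
    ¬ ∃ R : Lottery (ℝ × ℝ) → Lottery (ℝ × ℝ) → Prop,
      Reflexive R ∧ Transitive R ∧ Pareto R ∧ ConvPareto R ∧
      UnidimCont R ∧ UnidimCE R ∧ Independence R ∧ NegDominance R := by
  rintro ⟨R, -, hT, hP, hCP, hUC, hCE, hI, hND⟩
  have hhalf₀ : (0 : ℝ) < 1 / 2 := one_half_pos
  have hhalf₁ : (1 : ℝ) / 2 < 1 := one_half_lt_one
  obtain ⟨c, hc₀, hc₁, hc⟩ := hCE.exists_row_indiff_mix hP hCP (y := 0) one_pos hhalf₀ hhalf₁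
  obtain ⟨κ, hκ₀, hκ₁, hκ⟩ := hUC.exists_mix_indiff hP hCP (p := (1, 1)) (o := (c / 2, 1))
    (q := (0, 1)) (Prod.mk_lt_mk_iff_left.2 (half_pos hc₀))
    (Prod.mk_lt_mk_iff_left.2 (by linarith)) (Or.inr rfl) (Or.inr rfl) (Or.inr rfl)
  have hκ₀' : 0 < 1 - κ := sub_pos.2 hκ₁
  have hκ₁' : 1 - κ < 1 := sub_lt_self 1 hκ₀
  obtain ⟨a, -, -, ha⟩ := hCE.exists_row_indiff_mix hP hCP (y := 0) one_pos hκ₀' hκ₁'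
  obtain ⟨γ₀, hγ₀, -, hC₀⟩ := hCE.exists_col_indiff_mix hP hCP (x := 0) one_pos hκ₀' hκ₁'
  obtain ⟨γ₁, hγ₁, -, hC₁⟩ := hCE.exists_col_indiff_mix hP hCP (x := 1) one_pos hκ₀ hκ₁
  obtain ⟨γ, hγ, hγγ₀, hγγ₁⟩ : ∃ γ, 0 < γ ∧ γ ≤ γ₀ ∧ γ ≤ γ₁ :=
    ⟨min γ₀ γ₁, lt_min hγ₀ hγ₁, min_le_left γ₀ γ₁, min_le_right γ₀ γ₁⟩
  obtain ⟨c', -, -, hc'⟩ := hCE.exists_row_indiff_mix hP hCP (y := γ) one_pos hhalf₀ hhalf₁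
  have hcc' : c ≤ c' := hI.le_of_indiff_mix_row hT hP hCP hhalf₀ hhalf₁ hγ.le hc' hc
  have hQ : R (unif (a, 0) (c / 2, 1)) (delta (c', γ)) := by
    have hrows := (hI.mix_indiff_mix hT hhalf₀ hhalf₁ ha hκ).2
    rw [mix_half_mix_mix_comm (sub_add_cancel 1 κ)] at hrows
    have hcols := (hI.mix_indiff_mix hT hhalf₀ hhalf₁ hC₁ hC₀).1
    have hdown := hI.mix_le_mix hT hhalf₀ hhalf₁ (hP 1 γ₁ 1 γ le_rfl hγγ₁) (hP 0 γ₀ 0 γ le_rfl hγγ₀)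
    exact hT hrows (hT hcols (hT hdown hc'.1))
  rcases hND.le_or_le_of_mix_le_delta hT hP hCP hQ with h | h
  · exact hγ.not_ge h.2
  · linarith [h.1]
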